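/- arXiv:1512.03719 — 7 statements merged into one kernel-verified Lean document; each statement's English description precedes it below -/
import Mathlib

section
/- If real numbers a, b satisfy 0 < a ≤ b ≤ √2·a, then there exist positive real numbers x, y with a = (x+y)/2 and b = √(xy) + |x−y|/2. -/
/-! The pair is sought as `x = a + d`, `y = a - d`. Then `√(xy) = √(a² - d²)` and `|x - y| / 2 = d`,
so it suffices to find `r, d ≥ 0` with `r + d = b` and `r² + d² = a²`: a point of the line
`r + d = b` on the circle of radius `a` in the closed first quadrant. The line meets that arc
exactly when `a ≤ b ≤ √2 a`, and the intersection point with `d ≤ r` keeps `y` positive. -/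

open Real

theorem sqrt_mul_add_abs_sub_div_two_of_sq_add_sq {a r d : ℝ} (hr : 0 ≤ r) (hd : 0 ≤ d)
    (hrd : r ^ 2 + d ^ 2 = a ^ 2) :
    √((a + d) * (a - d)) + |a + d - (a - d)| / 2 = r + d := by
  have hprod : (a + d) * (a - d) = r ^ 2 := by linear_combination -hrd
  have hdiff : a + d - (a - d) = 2 * d := by ring
  rw [hprod, sqrt_sq hr, hdiff, abs_of_nonneg (by positivity)]
  ring

theorem exists_add_eq_and_sq_add_sq_eq {a b : ℝ} (hb : 0 ≤ b) (hab : a ^ 2 ≤ b ^ 2)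
    (hba : b ^ 2 ≤ 2 * a ^ 2) :
    ∃ r d : ℝ, 0 ≤ d ∧ d ≤ r ∧ r + d = b ∧ r ^ 2 + d ^ 2 = a ^ 2 := by
  set s := √(2 * a ^ 2 - b ^ 2)
  have hs : 0 ≤ s := sqrt_nonneg _
  have hs_sq : s ^ 2 = 2 * a ^ 2 - b ^ 2 := sq_sqrt (by linarith)
  have hsb : s ≤ b := by nlinarith
  refine ⟨(b + s) / 2, (b - s) / 2, by linarith, by linarith, by ring, ?_⟩
  linear_combination hs_sq / 2

theorem exists_pair_arith_reverse_geom (a b : ℝ) (ha : 0 < a) (hab : a ≤ b)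
    (hb : b ≤ Real.sqrt 2 * a) :
    ∃ x y : ℝ, 0 < x ∧ 0 < y ∧ a = (x + y) / 2 ∧
      b = Real.sqrt (x * y) + |x - y| / 2 := by
  have hb₀ : 0 ≤ b := ha.le.trans hab
  have hb_sq : b ^ 2 ≤ 2 * a ^ 2 := by
    calc b ^ 2 ≤ (√2 * a) ^ 2 := pow_le_pow_left₀ hb₀ hb 2
      _ = 2 * a ^ 2 := by rw [mul_pow, sq_sqrt zero_le_two]
  obtain ⟨r, d, hd, hdr, hsum, hcircle⟩ :=
    exists_add_eq_and_sq_add_sq_eq hb₀ (pow_le_pow_left₀ ha.le hab 2) hb_sq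
  have hda : d < a := by nlinarith
  refine ⟨a + d, a - d, by linarith, by linarith, by ring, ?_⟩
  rw [sqrt_mul_add_abs_sub_div_two_of_sq_add_sq (hd.trans hdr) hd hcircle, hsum]
end

section
/- If 0 < a ≤ b ≤ √2·a, then the quadratic equation 2x² + 2(b−2a)x + (b−a)² = 0 has a positive real solution x with x ≤ a. -/
/-!
The discriminant of `2x² + 2(b - 2a)x + (b - a)²` is `4(2a² - b²)`, nonnegative because
`b ≤ √2·a`, so the larger root is `x = (2a - b + √(2a² - b²))/2`. It is positive since
`b ≤ √2·a < 2a`, and it is at most `a` since `a ≤ b` gives `2a² - b² ≤ b²`.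
-/

open Real

section

noncomputable def largerRoot (a b : ℝ) : ℝ := (2 * a - b + √(2 * a ^ 2 - b ^ 2)) / 2

variable {a b : ℝ}

theorem largerRoot_isRoot (h : b ^ 2 ≤ 2 * a ^ 2) :
    2 * largerRoot a b ^ 2 + 2 * (b - 2 * a) * largerRoot a b + (b - a) ^ 2 = 0 := by
  have hsq : √(2 * a ^ 2 - b ^ 2) ^ 2 = 2 * a ^ 2 - b ^ 2 := sq_sqrt (by linarith)
  unfold largerRoot
  linear_combination hsq / 2

theorem largerRoot_pos (h : b < 2 * a) : 0 < largerRoot a b := by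
  have := sqrt_nonneg (2 * a ^ 2 - b ^ 2)
  unfold largerRoot
  linarith

theorem largerRoot_le (hb : 0 ≤ b) (h : a ^ 2 ≤ b ^ 2) : largerRoot a b ≤ a := by
  have : √(2 * a ^ 2 - b ^ 2) ≤ b := (sqrt_le_left hb).2 (by linarith)
  unfold largerRoot
  linarith

end

theorem quadratic_has_positive_solution (a b : ℝ) (ha : 0 < a) (hab : a ≤ b)
    (hb : b ≤ Real.sqrt 2 * a) :
    ∃ x : ℝ, 0 < x ∧ x ≤ a ∧ 2 * x ^ 2 + 2 * (b - 2 * a) * x + (b - a) ^ 2 = 0 := by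
  have hb0 : 0 ≤ b := ha.le.trans hab
  have hsq : b ^ 2 ≤ 2 * a ^ 2 := by
    have : √(2 * a ^ 2) = √2 * a := by rw [sqrt_mul zero_le_two, sqrt_sq ha.le]
    exact (le_sqrt hb0 (by positivity)).1 (this ▸ hb)
  have hlt : b < 2 * a := by
    have : √2 < 2 := (sqrt_lt' two_pos).2 (by norm_num)
    exact hb.trans_lt (mul_lt_mul_of_pos_right this ha)
  exact ⟨largerRoot a b, largerRoot_pos hlt,
    largerRoot_le hb0 (pow_le_pow_left₀ ha.le hab 2), largerRoot_isRoot hsq⟩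
end

section
/- For the 2×2 orthogonal projections P = [[1,0],[0,0]] and Q_θ = [[cos²θ, cosθ sinθ],[cosθ sinθ, sin²θ]], if a real number α satisfies (1−α)(P+Q_θ) ≤ |P−Q_θ| in the Loewner order for all θ in some punctured neighborhood of 0, then α ≥ 1. -/
/-!
`P - Q_θ` is Hermitian with square `sin²θ • 1`, so its spectrum lies in `{± |sin θ|}` and
`|P - Q_θ| = |sin θ| • 1`. Testing the Loewner inequality on `e₁` gives
`(1 - α)(1 + cos²θ) ≤ |sin θ| ≤ |θ|`, which fails for small `θ > 0` when `α < 1`.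
-/

open scoped ComplexOrder

/-- Matrix absolute value via functional calculus: `|X| = (XᴴX)^{1/2}` for Hermitian `X`. -/
noncomputable def matAbs {𝕜 : Type*} [RCLike 𝕜] {m : Type*} [Fintype m] [DecidableEq m]
    (X : Matrix m m 𝕜) : Matrix m m 𝕜 :=
  cfc (fun t : ℝ => |t|) X

/-- Matrix square root via functional calculus. -/
noncomputable def matSqrt {𝕜 : Type*} [RCLike 𝕜] {m : Type*} [Fintype m] [DecidableEq m]
    (X : Matrix m m 𝕜) : Matrix m m 𝕜 :=
  cfc Real.sqrt X

/-- Matrix geometric mean `A # B = A^{1/2} (A^{-1/2} B A^{-1/2})^{1/2} A^{1/2}`. -/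
noncomputable def geomMean {𝕜 : Type*} [RCLike 𝕜] {m : Type*} [Fintype m] [DecidableEq m]
    (A B : Matrix m m 𝕜) : Matrix m m 𝕜 :=
  matSqrt A * matSqrt ((matSqrt A)⁻¹ * B * (matSqrt A)⁻¹) * matSqrt A

/-- Loewner order: `A ≤ B` iff `B - A` is positive semidefinite. -/
def loewnerLE {𝕜 : Type*} [RCLike 𝕜] {m : Type*} [Fintype m] [DecidableEq m]
    (A B : Matrix m m 𝕜) : Prop :=
  (B - A).PosSemidef

open Real

theorem spectrum.pow_eq_of_pow_eq_algebraMap {𝕜 A : Type*} [Field 𝕜] [Ring A] [Algebra 𝕜 A]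
    {a : A} {n : ℕ} {r : 𝕜} (ha : a ^ n = algebraMap 𝕜 A r) {t : 𝕜} (ht : t ∈ spectrum 𝕜 a) :
    t ^ n = r := by
  cases subsingleton_or_nontrivial A
  · simp [spectrum.of_subsingleton] at ht
  simpa [ha] using spectrum.pow_mem_pow a n ht

theorem cfc_abs_eq_of_sq_eq_algebraMap {A : Type*} {p : A → Prop} [Ring A] [StarRing A]
    [Algebra ℝ A] [TopologicalSpace A] [ContinuousFunctionalCalculus ℝ A p] {a : A} {s : ℝ}
    (ha : p a) (h : a ^ 2 = algebraMap ℝ A (s ^ 2)) :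
    cfc (fun t : ℝ ↦ |t|) a = algebraMap ℝ A |s| := by
  rw [cfc_congr (g := fun _ : ℝ ↦ |s|) fun t ht ↦ (sq_eq_sq_iff_abs_eq_abs t s).mp
    (spectrum.pow_eq_of_pow_eq_algebraMap h ht), cfc_const |s| a ha]

noncomputable section

def projFst : Matrix (Fin 2) (Fin 2) ℂ := !![1, 0; 0, 0]

def projLine (θ : ℝ) : Matrix (Fin 2) (Fin 2) ℂ :=
  !![((cos θ ^ 2 : ℝ) : ℂ), ((cos θ * sin θ : ℝ) : ℂ);
     ((cos θ * sin θ : ℝ) : ℂ), ((sin θ ^ 2 : ℝ) : ℂ)]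

end

theorem isSelfAdjoint_projFst_sub_projLine (θ : ℝ) : IsSelfAdjoint (projFst - projLine θ) := by
  rw [IsSelfAdjoint, Matrix.star_eq_conjTranspose]
  ext i j
  -- keep `((cos θ : ℝ) : ℂ)` as an atom instead of rewriting it to `Complex.cos θ`
  fin_cases i <;> fin_cases j <;>
    simp [projFst, projLine, -Complex.ofReal_cos, -Complex.ofReal_sin]

theorem projFst_sub_projLine_sq (θ : ℝ) :
    (projFst - projLine θ) ^ 2 = algebraMap ℝ _ (sin θ ^ 2) := by
  have hθ : (cos θ : ℂ) ^ 2 + (sin θ : ℂ) ^ 2 = 1 := by exact_mod_cast cos_sq_add_sin_sq θ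
  ext i j
  fin_cases i <;> fin_cases j <;>
    simp [projFst, projLine, sq, Matrix.mul_apply, Fin.sum_univ_two,
      Matrix.algebraMap_matrix_apply, -Complex.ofReal_cos, -Complex.ofReal_sin]
  · linear_combination ((cos θ : ℂ) ^ 2 - 1) * hθ
  · linear_combination (cos θ * sin θ : ℂ) * hθ
  · linear_combination (cos θ * sin θ : ℂ) * hθ
  · linear_combination (sin θ : ℂ) ^ 2 * hθ

theorem matAbs_projFst_sub_projLine (θ : ℝ) :
    matAbs (projFst - projLine θ) = algebraMap ℝ _ |sin θ| :=
  cfc_abs_eq_of_sq_eq_algebraMap (isSelfAdjoint_projFst_sub_projLine θ) (projFst_sub_projLine_sq θ)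

theorem mul_one_add_cos_sq_le_abs_sin {c θ : ℝ}
    (h : loewnerLE ((c : ℂ) • (projFst + projLine θ)) (matAbs (projFst - projLine θ))) :
    c * (1 + cos θ ^ 2) ≤ |sin θ| := by
  rw [loewnerLE, matAbs_projFst_sub_projLine] at h
  have h00 := h.diag_nonneg (i := 0)
  simp [projFst, projLine, Matrix.algebraMap_matrix_apply, -Complex.ofReal_cos,
    -Complex.ofReal_sin] at h00
  exact_mod_cast h00

theorem alpha_ge_one_of_loewner_near_zero (α : ℝ)
    (h : ∃ δ > (0 : ℝ), ∀ θ : ℝ, θ ≠ 0 → |θ| < δ →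
      loewnerLE
        (((1 - α : ℝ) : ℂ) •
          ((!![1, 0; 0, 0] : Matrix (Fin 2) (Fin 2) ℂ) +
            !![((Real.cos θ ^ 2 : ℝ) : ℂ), ((Real.cos θ * Real.sin θ : ℝ) : ℂ);
               ((Real.cos θ * Real.sin θ : ℝ) : ℂ), ((Real.sin θ ^ 2 : ℝ) : ℂ)]))
        (matAbs
          ((!![1, 0; 0, 0] : Matrix (Fin 2) (Fin 2) ℂ) -
            !![((Real.cos θ ^ 2 : ℝ) : ℂ), ((Real.cos θ * Real.sin θ : ℝ) : ℂ);
               ((Real.cos θ * Real.sin θ : ℝ) : ℂ), ((Real.sin θ ^ 2 : ℝ) : ℂ)]))) :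
    1 ≤ α := by
  by_contra! hα
  obtain ⟨δ, hδ, hloewner⟩ := h
  obtain ⟨θ, hθ_pos, hθ_lt_min⟩ := exists_between (lt_min hδ (sub_pos.mpr hα))
  obtain ⟨hθ_lt_δ, hθ_lt⟩ := lt_min_iff.mp hθ_lt_min
  have hbound := mul_one_add_cos_sq_le_abs_sin
    (hloewner θ hθ_pos.ne' ((abs_of_pos hθ_pos).trans_lt hθ_lt_δ))
  have hsin : |sin θ| ≤ θ := by simpa [abs_of_pos hθ_pos] using abs_sin_le_abs (x := θ)
  nlinarith [sq_nonneg (cos θ)]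
end

section
/- For every positive definite matrix A with I ≤ A ≤ √2·I, there exist positive definite matrices X, Y with (X+Y)/2 = I and A = X # Y + (1/2) X^{1/2} |I − X^{-1/2} Y X^{-1/2}| X^{1/2}. -/
open scoped ComplexOrder

/-!
Functions of one Hermitian matrix commute, so the identity reduces to a scalar one on the spectrum
of `A`, which lies in `[1, √2]`. For an eigenvalue `a` put `t = (a - √(2 - a²)) / 2`, the root of
`√(1 - t²) + t = a` with `0 ≤ t < 1`, and take `X = 1 + t(A)`, `Y = 1 - t(A)`. Then `X + Y = 2`,
`X # Y = √(XY) = √(1 - t²)(A)` and `X^{1/2} |I - X^{-1/2} Y X^{-1/2}| X^{1/2} = |X - Y| = 2 t(A)`.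
-/

open scoped MatrixOrder

namespace Matrix

variable {𝕜 m : Type*} [RCLike 𝕜] [Fintype m] [DecidableEq m] {A : Matrix m m 𝕜}

theorem continuousOn_real_spectrum (A : Matrix m m 𝕜) (f : ℝ → ℝ) :
    ContinuousOn f (spectrum ℝ A) :=
  A.finite_real_spectrum.continuousOn f

theorem matSqrt_cfc (hA : IsSelfAdjoint A) (f : ℝ → ℝ) :
    matSqrt (cfc f A) = cfc (fun x => √(f x)) A :=
  (cfc_comp' _ f A (Set.Finite.continuousOn (A.finite_real_spectrum.image f) _)
    (A.continuousOn_real_spectrum f) hA).symm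

theorem matAbs_cfc (hA : IsSelfAdjoint A) (f : ℝ → ℝ) :
    matAbs (cfc f A) = cfc (fun x => |f x|) A :=
  (cfc_comp' _ f A (Set.Finite.continuousOn (A.finite_real_spectrum.image f) _)
    (A.continuousOn_real_spectrum f) hA).symm

theorem inv_cfc (hA : IsSelfAdjoint A) {f : ℝ → ℝ} (hf : ∀ x ∈ spectrum ℝ A, f x ≠ 0) :
    (cfc f A)⁻¹ = cfc (fun x => (f x)⁻¹) A := by
  rw [nonsing_inv_eq_ringInverse, cfc_inv f A hf (A.continuousOn_real_spectrum f) hA]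

theorem posDef_cfc (hA : IsSelfAdjoint A) {f : ℝ → ℝ} (hf : ∀ x ∈ spectrum ℝ A, 0 < f x) :
    (cfc f A).PosDef :=
  isStrictlyPositive_iff_posDef.mp
    ((cfc_isStrictlyPositive_iff f A (A.continuousOn_real_spectrum f) hA).mpr hf)

theorem inv_matSqrt_mul_mul_inv_matSqrt_cfc (hA : IsSelfAdjoint A) {f : ℝ → ℝ}
    (hf : ∀ x ∈ spectrum ℝ A, 0 < f x) (g : ℝ → ℝ) :
    (matSqrt (cfc f A))⁻¹ * cfc g A * (matSqrt (cfc f A))⁻¹ = cfc (fun x => g x / f x) A := by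
  have hcont := A.continuousOn_real_spectrum
  rw [matSqrt_cfc hA, inv_cfc hA fun x hx => (Real.sqrt_pos.mpr (hf x hx)).ne',
    ← cfc_mul _ _ A (hcont _) (hcont _), ← cfc_mul _ _ A (hcont _) (hcont _)]
  refine cfc_congr fun x hx => ?_
  conv_rhs => rw [← Real.mul_self_sqrt (hf x hx).le]
  ring

theorem geomMean_cfc (hA : IsSelfAdjoint A) {f : ℝ → ℝ} (hf : ∀ x ∈ spectrum ℝ A, 0 < f x)
    (g : ℝ → ℝ) :
    geomMean (cfc f A) (cfc g A) = cfc (fun x => √(f x * g x)) A := by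
  have hcont := A.continuousOn_real_spectrum
  rw [geomMean, inv_matSqrt_mul_mul_inv_matSqrt_cfc hA hf, matSqrt_cfc hA, matSqrt_cfc hA,
    ← cfc_mul _ _ A (hcont _) (hcont _), ← cfc_mul _ _ A (hcont _) (hcont _)]
  refine cfc_congr fun x hx => ?_
  rw [Real.sqrt_div' _ (hf x hx).le, Real.sqrt_mul (hf x hx).le]
  field_simp

theorem matSqrt_mul_matAbs_one_sub_mul_matSqrt_cfc (hA : IsSelfAdjoint A) {f : ℝ → ℝ}
    (hf : ∀ x ∈ spectrum ℝ A, 0 < f x) (g : ℝ → ℝ) :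
    matSqrt (cfc f A) * matAbs (1 - (matSqrt (cfc f A))⁻¹ * cfc g A * (matSqrt (cfc f A))⁻¹) *
      matSqrt (cfc f A) = cfc (fun x => |f x - g x|) A := by
  have hcont := A.continuousOn_real_spectrum
  rw [inv_matSqrt_mul_mul_inv_matSqrt_cfc hA hf, ← cfc_one ℝ A,
    ← cfc_sub _ _ A (hcont _) (hcont _), matAbs_cfc hA, matSqrt_cfc hA,
    ← cfc_mul _ _ A (hcont _) (hcont _), ← cfc_mul _ _ A (hcont _) (hcont _)]
  refine cfc_congr fun x hx => ?_
  have hfx := hf x hx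
  rw [Pi.one_apply, mul_right_comm, Real.mul_self_sqrt hfx.le,
    show f x - g x = f x * (1 - g x / f x) by field_simp, abs_mul, abs_of_pos hfx]

end Matrix

noncomputable def reverseOffset (x : ℝ) : ℝ := (x - √(2 - x ^ 2)) / 2

section reverseOffset

variable {x : ℝ}

theorem reverseOffset_nonneg (h1 : 1 ≤ x) : 0 ≤ reverseOffset x := by
  have : √(2 - x ^ 2) ≤ x := Real.sqrt_le_iff.mpr ⟨by linarith, by nlinarith⟩
  unfold reverseOffset
  linarith

theorem reverseOffset_lt_one (h2 : x ≤ √2) : reverseOffset x < 1 := by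
  have : √2 < 2 := by rw [Real.sqrt_lt' two_pos]; norm_num
  have := Real.sqrt_nonneg (2 - x ^ 2)
  unfold reverseOffset
  linarith

theorem sqrt_mul_add_abs_sub_div_two_reverseOffset (h1 : 1 ≤ x) (h2 : x ≤ √2) :
    √((1 + reverseOffset x) * (1 - reverseOffset x)) +
      |(1 + reverseOffset x) - (1 - reverseOffset x)| / 2 = x := by
  have ht := reverseOffset_nonneg h1
  have hx2 : x ^ 2 ≤ 2 := by
    simpa using pow_le_pow_left₀ (by linarith) h2 2
  have hs := Real.sq_sqrt (sub_nonneg.mpr hx2)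
  have hs0 := Real.sqrt_nonneg (2 - x ^ 2)
  have hprod : (1 + reverseOffset x) * (1 - reverseOffset x) = (x - reverseOffset x) ^ 2 := by
    unfold reverseOffset; linear_combination (-1 / 2 : ℝ) * hs
  rw [hprod, Real.sqrt_sq (by unfold reverseOffset; linarith),
    show (1 + reverseOffset x) - (1 - reverseOffset x) = 2 * reverseOffset x by ring,
    abs_of_nonneg (by linarith)]
  ring

end reverseOffset

theorem exists_XY_reverse_rep_one {n : ℕ} (A : Matrix (Fin n) (Fin n) ℂ) (hA : A.PosDef)
    (h1 : loewnerLE 1 A) (h2 : loewnerLE A (((Real.sqrt 2 : ℝ) : ℂ) • 1)) :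
    ∃ X Y : Matrix (Fin n) (Fin n) ℂ, X.PosDef ∧ Y.PosDef ∧
      (1 / 2 : ℂ) • (X + Y) = 1 ∧
      A = geomMean X Y +
        (1 / 2 : ℂ) •
          (matSqrt X * matAbs (1 - (matSqrt X)⁻¹ * Y * (matSqrt X)⁻¹) * matSqrt X) := by
  have hsa : IsSelfAdjoint A := hA.isHermitian
  have hcont := A.continuousOn_real_spectrum
  have hspec : ∀ x ∈ spectrum ℝ A, 1 ≤ x ∧ x ≤ √2 := fun x hx =>
    ⟨(algebraMap_le_iff_le_spectrum (r := (1 : ℝ)) hsa).mp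
        (by simpa using Matrix.le_iff.mpr h1) x hx,
      (le_algebraMap_iff_spectrum_le hsa).mp
        (by simpa [Algebra.algebraMap_eq_smul_one] using Matrix.le_iff.mpr h2) x hx⟩
  have hhalf (M : Matrix (Fin n) (Fin n) ℂ) : (1 / 2 : ℂ) • M = (1 / 2 : ℝ) • M := by
    rw [← Complex.coe_smul]; norm_num
  have hX : ∀ x ∈ spectrum ℝ A, 0 < 1 + reverseOffset x := fun x hx => by
    linarith [reverseOffset_nonneg (hspec x hx).1]
  have hY : ∀ x ∈ spectrum ℝ A, 0 < 1 - reverseOffset x := fun x hx => by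
    linarith [reverseOffset_lt_one (hspec x hx).2]
  refine ⟨cfc (1 + reverseOffset ·) A, cfc (1 - reverseOffset ·) A,
    Matrix.posDef_cfc hsa hX, Matrix.posDef_cfc hsa hY, ?_, ?_⟩
  · rw [hhalf, ← cfc_add _ _ _ (hcont _) (hcont _), ← cfc_smul _ _ _ (hcont _),
      ← cfc_const_one ℝ A]
    exact cfc_congr fun x _ => by rw [smul_eq_mul]; ring
  · rw [Matrix.geomMean_cfc hsa hX, Matrix.matSqrt_mul_matAbs_one_sub_mul_matSqrt_cfc hsa hX,
      hhalf, ← cfc_smul _ _ _ (hcont _), ← cfc_add _ _ _ (hcont _) (hcont _)]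
    nth_rw 1 [← cfc_id' ℝ A]
    refine cfc_congr fun x hx => ?_
    rw [smul_eq_mul]
    linarith [sqrt_mul_add_abs_sub_div_two_reverseOffset (hspec x hx).1 (hspec x hx).2]
end

section
/- If X₀, Y₀ are positive semidefinite matrices with X₀ ≤ I ≤ Y₀ and X₀ + Y₀ = 2I, and A is positive definite, then A − A^{1/2} X₀ A^{1/2} = (1/2)(A^{1/2} X₀ A^{1/2})^{1/2} · |(A^{1/2} X₀ A^{1/2})^{-1/2} (A^{1/2} Y₀ A^{1/2}) (A^{1/2} X₀ A^{1/2})^{-1/2} − I| · (A^{1/2} X₀ A^{1/2})^{1/2}. -/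
open scoped ComplexOrder

open scoped MatrixOrder

/-!
With `S = A^{1/2}`, `M = S X₀ S` and `N = S Y₀ S`, the constraint `X₀ + Y₀ = 2` gives
`N - M = 2 (A - M) = 2 S (1 - X₀) S`, which is positive semidefinite because `X₀ ≤ 1`.
Hence `M^{-1/2} N M^{-1/2} - 1 = M^{-1/2} (N - M) M^{-1/2}` is positive semidefinite, so its
absolute value is itself, and conjugating back by `M^{1/2}` leaves `(N - M) / 2 = A - M`.
-/

section

variable {𝕜 m : Type*} [RCLike 𝕜] [Fintype m] [DecidableEq m]

lemma isHermitian_matSqrt (P : Matrix m m 𝕜) : (matSqrt P).IsHermitian :=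
  cfc_predicate Real.sqrt P

lemma matSqrt_mul_self {P : Matrix m m 𝕜} (hP : P.PosSemidef) : matSqrt P * matSqrt P = P := by
  rw [matSqrt, ← cfc_mul Real.sqrt Real.sqrt P]
  exact (cfc_congr fun x hx ↦ Real.mul_self_sqrt (spectrum_nonneg_of_nonneg hP.nonneg hx)).trans
    (cfc_id' ℝ P hP.isHermitian)

lemma isUnit_matSqrt {P : Matrix m m 𝕜} (hP : P.PosSemidef) (hPu : IsUnit P) :
    IsUnit (matSqrt P) :=
  isUnit_of_mul_isUnit_left (y := matSqrt P) (by rwa [matSqrt_mul_self hP])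

lemma matAbs_of_posSemidef {P : Matrix m m 𝕜} (hP : P.PosSemidef) : matAbs P = P :=
  (cfc_congr fun _ hx ↦ abs_of_nonneg (spectrum_nonneg_of_nonneg hP.nonneg hx)).trans
    (cfc_id' ℝ P hP.isHermitian)

lemma inv_mul_mul_inv_sub_one {R : Matrix m m 𝕜} (N : Matrix m m 𝕜) (hR : IsUnit R) :
    R⁻¹ * N * R⁻¹ - 1 = R⁻¹ * (N - R * R) * R⁻¹ := by
  have hdet := (Matrix.isUnit_iff_isUnit_det R).mp hR
  rw [Matrix.mul_sub, Matrix.sub_mul,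
    show R⁻¹ * (R * R) * R⁻¹ = (R⁻¹ * R) * (R * R⁻¹) by noncomm_ring,
    Matrix.nonsing_inv_mul R hdet, Matrix.mul_nonsing_inv R hdet, one_mul]

lemma mul_matAbs_inv_mul_mul_inv_mul {R P : Matrix m m 𝕜} (hR : R.IsHermitian) (hRu : IsUnit R)
    (hP : P.PosSemidef) : R * matAbs (R⁻¹ * P * R⁻¹) * R = P := by
  have hconj := hP.conjTranspose_mul_mul_same R⁻¹
  rw [Matrix.conjTranspose_nonsing_inv, hR.eq] at hconj
  have hdet := (Matrix.isUnit_iff_isUnit_det R).mp hRu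
  rw [matAbs_of_posSemidef hconj,
    show R * (R⁻¹ * P * R⁻¹) * R = (R * R⁻¹) * P * (R⁻¹ * R) by noncomm_ring,
    Matrix.mul_nonsing_inv R hdet, Matrix.nonsing_inv_mul R hdet, one_mul, mul_one]

end

theorem sub_eq_half_abs_conj_general {n : ℕ} (A X₀ Y₀ : Matrix (Fin n) (Fin n) ℂ)
    (hA : A.PosDef) (hX₀ : X₀.PosDef)
    (hX₀le : loewnerLE X₀ 1) (hsum : X₀ + Y₀ = 2) :
    A - matSqrt A * X₀ * matSqrt A =
      (1 / 2 : ℂ) •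
        (matSqrt (matSqrt A * X₀ * matSqrt A) *
          matAbs
            ((matSqrt (matSqrt A * X₀ * matSqrt A))⁻¹ *
                (matSqrt A * Y₀ * matSqrt A) *
                  (matSqrt (matSqrt A * X₀ * matSqrt A))⁻¹ - 1) *
          matSqrt (matSqrt A * X₀ * matSqrt A)) := by
  set S := matSqrt A
  set M := S * X₀ * S
  have hSS : S * S = A := matSqrt_mul_self hA.posSemidef
  have hS : IsUnit S := isUnit_matSqrt hA.posSemidef hA.isUnit
  have hM : M.PosSemidef := by
    have h := hX₀.posSemidef.conjTranspose_mul_mul_same S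
    rwa [(isHermitian_matSqrt A).eq] at h
  have hgap : (A - M).PosSemidef := by
    have h := hX₀le.conjTranspose_mul_mul_same S
    rwa [(isHermitian_matSqrt A).eq, Matrix.mul_sub, Matrix.sub_mul, Matrix.mul_one, hSS] at h
  have hN : S * Y₀ * S - M = (2 : ℂ) • (A - M) := by
    rw [eq_sub_of_add_eq' hsum, two_smul, ← hSS]
    simp only [M]
    noncomm_ring
  have hR : IsUnit (matSqrt M) := isUnit_matSqrt hM ((hS.mul hX₀.isUnit).mul hS)
  rw [inv_mul_mul_inv_sub_one _ hR, matSqrt_mul_self hM,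
    mul_matAbs_inv_mul_mul_inv_mul (isHermitian_matSqrt M) hR (hN ▸ hgap.smul (by norm_num)), hN,
    smul_smul]
  norm_num

theorem sub_eq_half_abs_conj {n : ℕ} (A X₀ Y₀ : Matrix (Fin n) (Fin n) ℂ)
    (hA : A.PosDef) (hX₀ : X₀.PosDef) (hY₀ : Y₀.PosSemidef)
    (hX₀le : loewnerLE X₀ 1) (hY₀ge : loewnerLE 1 Y₀) (hsum : X₀ + Y₀ = 2) :
    A - matSqrt A * X₀ * matSqrt A =
      (1 / 2 : ℂ) •
        (matSqrt (matSqrt A * X₀ * matSqrt A) *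
          matAbs
            ((matSqrt (matSqrt A * X₀ * matSqrt A))⁻¹ *
                (matSqrt A * Y₀ * matSqrt A) *
                  (matSqrt (matSqrt A * X₀ * matSqrt A))⁻¹ - 1) *
          matSqrt (matSqrt A * X₀ * matSqrt A)) :=
  sub_eq_half_abs_conj_general A X₀ Y₀ hA hX₀ hX₀le hsum
end

section
/- If A, B are positive definite matrices with I ≤ A^{-1/2} B A^{-1/2}, then there exist positive definite matrices Z₁ = I ≤ Z₂ ≤ ⋯ ≤ Z_k = A^{-1/2} B A^{-1/2} with Zᵢ ≤ Zᵢ₊₁ ≤ √2·Zᵢ for all i; consequently the chain Cᵢ = A^{1/2} Zᵢ A^{1/2} satisfies A = C₁ ≤ C₂ ≤ ⋯ ≤ C_k = B and Cᵢ ≤ Cᵢ₊₁ ≤ √2·Cᵢ. -/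
open scoped ComplexOrder

/-! Put `M = A^{-1/2} B A^{-1/2}`, so `1 ≤ M`. If the spectrum of `M` lies in `[1, c^k]`, the
fractional powers `M^{j/k}`, `j = 0, …, k`, increase from `1` to `M`, and consecutive ones differ by
the factor `M^{1/k} ≤ c`; take `c = √2`. Congruence by the Hermitian matrix `A^{1/2}` preserves the
Loewner order, so it carries this chain to one from `A` to `B`. -/

open scoped MatrixOrder

theorem Real.rpow_add_inv_natCast_le_mul {x c : ℝ} {k : ℕ} (hx : 1 ≤ x) (hc : 0 ≤ c)
    (hxc : x ≤ c ^ k) (hk : k ≠ 0) (e : ℝ) : x ^ (e + (k : ℝ)⁻¹) ≤ c * x ^ e := by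
  have hx0 : 0 < x := zero_lt_one.trans_le hx
  have hroot : x ^ (k : ℝ)⁻¹ ≤ c :=
    (Real.rpow_inv_le_iff_of_pos hx0.le hc (by positivity)).2 (by simpa using hxc)
  rw [Real.rpow_add hx0, mul_comm]
  exact mul_le_mul_of_nonneg_right hroot (by positivity)

theorem loewnerLE_iff_le {𝕜 : Type*} [RCLike 𝕜] {m : Type*} [Fintype m] [DecidableEq m]
    {A B : Matrix m m 𝕜} : loewnerLE A B ↔ A ≤ B :=
  Iff.rfl

namespace Matrix

variable {𝕜 : Type*} [RCLike 𝕜] {m : Type*} [DecidableEq m]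

theorem isHermitian_of_one_le {M : Matrix m m 𝕜} (hM : 1 ≤ M) : M.IsHermitian := by
  simpa using (le_iff.mp hM).isHermitian.add isHermitian_one

theorem posDef_of_one_le {M : Matrix m m 𝕜} (hM : 1 ≤ M) : M.PosDef := by
  simpa using PosDef.one.add_posSemidef (le_iff.mp hM)

variable [Fintype m]

theorem continuousOn_spectrum (f : ℝ → ℝ) (A : Matrix m m 𝕜) : ContinuousOn f (spectrum ℝ A) :=
  finite_real_spectrum.continuousOn f

theorem one_le_of_mem_spectrum {M : Matrix m m 𝕜} (hM : 1 ≤ M) {x : ℝ}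
    (hx : x ∈ spectrum ℝ M) : 1 ≤ x :=
  (CFC.one_le_iff M (isHermitian_of_one_le hM)).1 hM x hx

theorem one_le_cfc_rpow {M : Matrix m m 𝕜} (hM : 1 ≤ M) {e : ℝ} (he : 0 ≤ e) :
    1 ≤ cfc (fun x : ℝ => x ^ e) M :=
  (one_le_cfc_iff _ M (M.continuousOn_spectrum _) (isHermitian_of_one_le hM)).2
    fun _ hx => Real.one_le_rpow (one_le_of_mem_spectrum hM hx) he

theorem cfc_rpow_mono {M : Matrix m m 𝕜} (hM : 1 ≤ M) {e e' : ℝ} (hee' : e ≤ e') :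
    cfc (fun x : ℝ => x ^ e) M ≤ cfc (fun x : ℝ => x ^ e') M :=
  cfc_mono (fun _ hx => Real.rpow_le_rpow_of_exponent_le (one_le_of_mem_spectrum hM hx) hee')
    (M.continuousOn_spectrum _) (M.continuousOn_spectrum _)

theorem cfc_rpow_add_inv_natCast_le_smul {M : Matrix m m 𝕜} (hM : 1 ≤ M) {c : ℝ}
    (hc : 0 ≤ c) {k : ℕ} (hk : k ≠ 0) (hMc : ∀ x ∈ spectrum ℝ M, x ≤ c ^ k) (e : ℝ) :
    cfc (fun x : ℝ => x ^ (e + (k : ℝ)⁻¹)) M ≤ c • cfc (fun x : ℝ => x ^ e) M := by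
  rw [← cfc_smul c _ M (M.continuousOn_spectrum _)]
  exact cfc_mono (fun x hx => Real.rpow_add_inv_natCast_le_mul
    (one_le_of_mem_spectrum hM hx) hc (hMc x hx) hk e)
    (M.continuousOn_spectrum _) (M.continuousOn_spectrum _)

theorem exists_loewner_chain {M : Matrix m m 𝕜} (hM : 1 ≤ M) {c : ℝ} (hc : 1 < c) :
    ∃ (k : ℕ) (Z : ℕ → Matrix m m 𝕜), 1 ≤ k ∧ (∀ i, 1 ≤ Z i) ∧ Z 1 = 1 ∧ Z k = M ∧
      ∀ i, 1 ≤ i → Z i ≤ Z (i + 1) ∧ Z (i + 1) ≤ c • Z i := by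
  have hMsa : IsSelfAdjoint M := isHermitian_of_one_le hM
  obtain ⟨T, hT⟩ := (finite_real_spectrum (A := M)).bddAbove
  obtain ⟨k, hk⟩ := pow_unbounded_of_one_lt T hc
  have hMc : ∀ x ∈ spectrum ℝ M, x ≤ c ^ (k + 1) := fun x hx =>
    (hT hx).trans (hk.le.trans (pow_le_pow_right₀ hc.le k.le_succ))
  refine ⟨k + 2, fun i => cfc (fun x : ℝ => x ^ (((i - 1 : ℕ) : ℝ) / (k + 1 : ℕ))) M,
    by omega, fun i => M.one_le_cfc_rpow hM (by positivity), ?_, ?_, fun i hi => ?_⟩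
  · simpa using cfc_const_one ℝ M
  · have hexp : (((k + 2 - 1 : ℕ) : ℝ) / (k + 1 : ℕ)) = 1 := div_self (by norm_cast; omega)
    simpa only [hexp, Real.rpow_one] using cfc_id' ℝ M
  · have hexp : (((i + 1 - 1 : ℕ) : ℝ) / (k + 1 : ℕ))
        = ((i - 1 : ℕ) : ℝ) / (k + 1 : ℕ) + ((k + 1 : ℕ) : ℝ)⁻¹ := by
      rw [Nat.add_sub_cancel, Nat.cast_pred hi]
      field_simp
      ring
    simp only [hexp]
    exact ⟨M.cfc_rpow_mono hM (le_add_of_nonneg_right (by positivity)),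
      M.cfc_rpow_add_inv_natCast_le_smul hM (zero_le_one.trans hc.le) k.succ_ne_zero hMc _⟩

end Matrix

section MatSqrt

variable {𝕜 : Type*} [RCLike 𝕜] {m : Type*} [Fintype m] [DecidableEq m]

theorem isSelfAdjoint_matSqrt (A : Matrix m m 𝕜) : IsSelfAdjoint (matSqrt A) :=
  cfc_predicate _ _

theorem matSqrt_mul_self_s17 {A : Matrix m m 𝕜} (hA : A.PosSemidef) : matSqrt A * matSqrt A = A := by
  have hAsa : IsSelfAdjoint A := hA.isHermitian
  rw [matSqrt, ← cfc_mul _ _ A (A.continuousOn_spectrum _) (A.continuousOn_spectrum _)]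
  calc cfc (fun x => √x * √x) A = cfc (fun x : ℝ => x) A :=
        cfc_congr fun _ hx => Real.mul_self_sqrt (spectrum_nonneg_of_nonneg hA.nonneg hx)
    _ = A := cfc_id' ℝ A

theorem isUnit_matSqrt_s17 {A : Matrix m m 𝕜} (hA : A.PosDef) : IsUnit (matSqrt A) :=
  isUnit_of_mul_isUnit_left ((matSqrt_mul_self_s17 hA.posSemidef).symm ▸ hA.isUnit)

theorem matSqrt_mul_inv_mul_inv_mul_matSqrt {A : Matrix m m 𝕜} (hA : A.PosDef)
    (B : Matrix m m 𝕜) : matSqrt A * ((matSqrt A)⁻¹ * B * (matSqrt A)⁻¹) * matSqrt A = B := by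
  have hdet := (Matrix.isUnit_iff_isUnit_det _).1 (isUnit_matSqrt_s17 hA)
  simp only [Matrix.mul_assoc, Matrix.nonsing_inv_mul _ hdet, Matrix.mul_one,
    Matrix.mul_nonsing_inv_cancel_left _ _ hdet]

end MatSqrt

theorem exists_sqrt_two_matrix_chain_general {n : ℕ} (A B : Matrix (Fin n) (Fin n) ℂ)
    (hA : A.PosDef)
    (h : loewnerLE 1 ((matSqrt A)⁻¹ * B * (matSqrt A)⁻¹)) :
    ∃ (k : ℕ) (Z : ℕ → Matrix (Fin n) (Fin n) ℂ), 1 ≤ k ∧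
      (∀ i, 1 ≤ i → i ≤ k → (Z i).PosDef) ∧
      Z 1 = 1 ∧ Z k = (matSqrt A)⁻¹ * B * (matSqrt A)⁻¹ ∧
      (∀ i, 1 ≤ i → i < k →
        loewnerLE (Z i) (Z (i + 1)) ∧
          loewnerLE (Z (i + 1)) (((Real.sqrt 2 : ℝ) : ℂ) • Z i)) ∧
      matSqrt A * Z 1 * matSqrt A = A ∧ matSqrt A * Z k * matSqrt A = B ∧
      (∀ i, 1 ≤ i → i < k →
        loewnerLE (matSqrt A * Z i * matSqrt A) (matSqrt A * Z (i + 1) * matSqrt A) ∧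
          loewnerLE (matSqrt A * Z (i + 1) * matSqrt A)
            (((Real.sqrt 2 : ℝ) : ℂ) • (matSqrt A * Z i * matSqrt A))) := by
  have hS : IsSelfAdjoint (matSqrt A) := isSelfAdjoint_matSqrt A
  have hsmul (X : Matrix (Fin n) (Fin n) ℂ) : ((√2 : ℝ) : ℂ) • X = (√2 : ℝ) • X :=
    (RCLike.real_smul_eq_coe_smul _ X).symm
  obtain ⟨k, Z, hk, hZ, hZ1, hZk, hstep⟩ := Matrix.exists_loewner_chain h Real.one_lt_sqrt_two
  refine ⟨k, Z, hk, fun i _ _ => Matrix.posDef_of_one_le (hZ i), hZ1, hZk, fun i hi _ => ?_,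
    ?_, ?_, fun i hi _ => ?_⟩
  · simpa only [loewnerLE_iff_le, hsmul] using hstep i hi
  · rw [hZ1, Matrix.mul_one, matSqrt_mul_self_s17 hA.posSemidef]
  · rw [hZk, matSqrt_mul_inv_mul_inv_mul_matSqrt hA]
  · obtain ⟨hle, hle'⟩ := hstep i hi
    have hratio := hS.conjugate_le_conjugate hle'
    rw [mul_smul_comm, smul_mul_assoc] at hratio
    simpa only [loewnerLE_iff_le, hsmul] using ⟨hS.conjugate_le_conjugate hle, hratio⟩

theorem exists_sqrt_two_matrix_chain {n : ℕ} (A B : Matrix (Fin n) (Fin n) ℂ)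
    (hA : A.PosDef) (hB : B.PosDef)
    (h : loewnerLE 1 ((matSqrt A)⁻¹ * B * (matSqrt A)⁻¹)) :
    ∃ (k : ℕ) (Z : ℕ → Matrix (Fin n) (Fin n) ℂ), 1 ≤ k ∧
      (∀ i, 1 ≤ i → i ≤ k → (Z i).PosDef) ∧
      Z 1 = 1 ∧ Z k = (matSqrt A)⁻¹ * B * (matSqrt A)⁻¹ ∧
      (∀ i, 1 ≤ i → i < k →
        loewnerLE (Z i) (Z (i + 1)) ∧
          loewnerLE (Z (i + 1)) (((Real.sqrt 2 : ℝ) : ℂ) • Z i)) ∧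
      matSqrt A * Z 1 * matSqrt A = A ∧ matSqrt A * Z k * matSqrt A = B ∧
      (∀ i, 1 ≤ i → i < k →
        loewnerLE (matSqrt A * Z i * matSqrt A) (matSqrt A * Z (i + 1) * matSqrt A) ∧
          loewnerLE (matSqrt A * Z (i + 1) * matSqrt A)
            (((Real.sqrt 2 : ℝ) : ℂ) • (matSqrt A * Z i * matSqrt A))) :=
  exists_sqrt_two_matrix_chain_general A B hA h
end

section
/- If P and Q are orthogonal projections on a finite-dimensional Hilbert space with P ∧ Q = 0 (intersection of ranges is {0}), then the parallel sum satisfies (λP) : Q = 0 for every λ > 0, where X : Y = (X^{-1} + Y^{-1})^{-1} is extended to singular operators by X : Y = lim_{ε→0⁺} ((X+εI)^{-1} + (Y+εI)^{-1})^{-1}. -/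
open scoped ComplexOrder

/-! For an idempotent `P`, `(a • P + ε • 1)⁻¹ = (a + ε)⁻¹ • P + ε⁻¹ • (1 - P)`. Hence the
regularised harmonic sum `(λP + ε)⁻¹ + (Q + ε)⁻¹` equals `ε⁻¹ • T ε` with
`T ε → (1 - P) + (1 - Q)` as `ε → 0`, and the regularised parallel sum is `ε • (T ε)⁻¹`.
The limit `(1 - P) + (1 - Q)` is a sum of positive semidefinite matrices whose kernel is
`ran P ∩ ran Q = 0`, so it is invertible, and `ε • (T ε)⁻¹ → 0`. -/

open Matrix Filter Topology

namespace Matrix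

variable {m : Type*} [Fintype m]

section Field

variable [DecidableEq m] {K : Type*} [Field K]

theorem inv_smul_of_ne_zero {c : K} (hc : c ≠ 0) (A : Matrix m m K) :
    (c • A)⁻¹ = c⁻¹ • A⁻¹ := by
  by_cases hA : IsUnit A.det
  · exact inv_smul' A (Units.mk0 c hc) hA
  · have hcA : ¬IsUnit (c • A).det := by simpa [det_smul, hc, isUnit_iff_ne_zero] using hA
    rw [nonsing_inv_apply_not_isUnit _ hA, nonsing_inv_apply_not_isUnit _ hcA, smul_zero]

theorem inv_smul_add_smul_one_of_isIdempotentElem {P : Matrix m m K} (hP : IsIdempotentElem P)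
    {a e : K} (hae : a + e ≠ 0) (he : e ≠ 0) :
    (a • P + e • 1)⁻¹ = (a + e)⁻¹ • P + e⁻¹ • (1 - P) := by
  apply inv_eq_right_inv
  simp only [add_mul, mul_add, Matrix.smul_mul, Matrix.mul_smul, mul_sub, mul_one, one_mul, hP.eq,
    smul_smul, smul_sub]
  match_scalars <;> field_simp
  ring

theorem inv_inv_add_inv_of_isIdempotentElem {P Q : Matrix m m K} (hP : IsIdempotentElem P)
    (hQ : IsIdempotentElem Q) {a b e : K} (hae : a + e ≠ 0) (hbe : b + e ≠ 0) (he : e ≠ 0) :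
    ((a • P + e • 1)⁻¹ + (b • Q + e • 1)⁻¹)⁻¹ =
      e • (1 - P + (1 - Q) + (e / (a + e)) • P + (e / (b + e)) • Q)⁻¹ := by
  have hsum : (a • P + e • 1)⁻¹ + (b • Q + e • 1)⁻¹ =
      e⁻¹ • (1 - P + (1 - Q) + (e / (a + e)) • P + (e / (b + e)) • Q) := by
    rw [inv_smul_add_smul_one_of_isIdempotentElem hP hae he,
      inv_smul_add_smul_one_of_isIdempotentElem hQ hbe he]
    match_scalars <;> field_simp <;> ring
  rw [hsum, inv_smul_of_ne_zero (inv_ne_zero he), inv_inv]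

end Field

section RCLike

variable {𝕜 : Type*} [RCLike 𝕜]

theorem IsHermitian.posSemidef_of_isIdempotentElem {R : Matrix m m 𝕜} (hR : R.IsHermitian)
    (hRR : IsIdempotentElem R) : R.PosSemidef := by
  simpa only [hR.eq, hRR.eq] using posSemidef_conjTranspose_mul_self R

theorem PosSemidef.mulVec_eq_zero_of_add_mulVec_eq_zero {A B : Matrix m m 𝕜} (hA : A.PosSemidef)
    (hB : B.PosSemidef) {x : m → 𝕜} (hx : (A + B) *ᵥ x = 0) : A *ᵥ x = 0 := by
  have hsum : star x ⬝ᵥ (A *ᵥ x) + star x ⬝ᵥ (B *ᵥ x) = 0 := by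
    rw [← dotProduct_add, ← add_mulVec, hx, dotProduct_zero]
  rw [← hA.dotProduct_mulVec_zero_iff]
  refine le_antisymm ?_ (hA.dotProduct_mulVec_nonneg x)
  rw [eq_neg_of_add_eq_zero_left hsum, neg_nonpos]
  exact hB.dotProduct_mulVec_nonneg x

theorem isUnit_one_sub_add_one_sub [DecidableEq m] {P Q : Matrix m m 𝕜} (hP : P.IsHermitian)
    (hPP : IsIdempotentElem P) (hQ : Q.IsHermitian) (hQQ : IsIdempotentElem Q)
    (hPQ : LinearMap.range P.mulVecLin ⊓ LinearMap.range Q.mulVecLin = ⊥) :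
    IsUnit (1 - P + (1 - Q)) := by
  have hP' := (isHermitian_one.sub hP).posSemidef_of_isIdempotentElem hPP.one_sub
  have hQ' := (isHermitian_one.sub hQ).posSemidef_of_isIdempotentElem hQQ.one_sub
  rw [← mulVec_injective_iff_isUnit]
  refine (injective_iff_map_eq_zero (1 - P + (1 - Q)).mulVecLin).mpr fun x hx => ?_
  have hPx : P *ᵥ x = x := by
    simpa [sub_mulVec, sub_eq_zero, eq_comm] using hP'.mulVec_eq_zero_of_add_mulVec_eq_zero hQ' hx
  have hQx : Q *ᵥ x = x := by
    rw [add_comm] at hx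
    simpa [sub_mulVec, sub_eq_zero, eq_comm] using hQ'.mulVec_eq_zero_of_add_mulVec_eq_zero hP' hx
  have hxPQ : x ∈ LinearMap.range P.mulVecLin ⊓ LinearMap.range Q.mulVecLin :=
    ⟨⟨x, hPx⟩, ⟨x, hQx⟩⟩
  simpa [hPQ] using hxPQ

theorem tendsto_ofReal_smul_inv [DecidableEq m] {T : ℝ → Matrix m m 𝕜} (hT : ContinuousAt T 0)
    (hT0 : IsUnit (T 0)) : Tendsto (fun ε : ℝ => (ε : 𝕜) • (T ε)⁻¹) (𝓝 0) (𝓝 0) := by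
  have hdet : ContinuousAt Ring.inverse (T 0).det :=
    NormedRing.inverse_continuousAt ((isUnit_iff_isUnit_det _).mp hT0).unit
  have hinv := (continuousAt_matrix_inv _ hdet).tendsto.comp hT.tendsto
  have hε : Tendsto (fun ε : ℝ => (ε : 𝕜)) (𝓝 0) (𝓝 0) := by
    simpa using (RCLike.continuous_ofReal (K := 𝕜)).tendsto 0
  simpa using hε.smul hinv

end RCLike

end Matrix

theorem parallel_sum_proj_zero {n : ℕ} (P Q : Matrix (Fin n) (Fin n) ℂ)
    (hP : P.IsHermitian) (hPidem : P * P = P)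
    (hQ : Q.IsHermitian) (hQidem : Q * Q = Q)
    (hmeet : LinearMap.range P.mulVecLin ⊓ LinearMap.range Q.mulVecLin = ⊥)
    (l : ℝ) (hl : 0 < l) :
    Filter.Tendsto
      (fun ε : ℝ =>
        ((((l : ℂ) • P + (ε : ℂ) • 1)⁻¹ + (Q + (ε : ℂ) • 1)⁻¹)⁻¹ :
          Matrix (Fin n) (Fin n) ℂ))
      (nhdsWithin 0 (Set.Ioi 0)) (nhds 0) := by
  set T : ℝ → Matrix (Fin n) (Fin n) ℂ := fun ε =>
    1 - P + (1 - Q) + ((ε : ℂ) / (l + ε)) • P + ((ε : ℂ) / (1 + ε)) • Q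
  have hT : ContinuousAt T 0 := by
    simp only [T]
    fun_prop (disch := simp [hl.ne'])
  have hT0 : IsUnit (T 0) := by
    simpa [T] using isUnit_one_sub_add_one_sub hP hPidem hQ hQidem hmeet
  refine ((tendsto_ofReal_smul_inv hT hT0).mono_left nhdsWithin_le_nhds).congr' ?_
  filter_upwards [self_mem_nhdsWithin] with ε (hε : 0 < ε)
  have hlε : (l : ℂ) + ε ≠ 0 := by exact_mod_cast (add_pos hl hε).ne'
  have h1ε : (1 : ℂ) + ε ≠ 0 := by exact_mod_cast (add_pos one_pos hε).ne'
  rw [← one_smul ℂ Q, inv_inv_add_inv_of_isIdempotentElem hPidem hQidem hlε h1ε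
    (by exact_mod_cast hε.ne')]
  rfl
end
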